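/- arXiv:2402.04570 — 4 statements merged into one kernel-verified Lean document; each statement's English description precedes it below -/
import Mathlib

section
/- Let X be a nonempty set, K ∈ ℕ, and for each k ∈ {1,…,K} let a_k : X → ℂ, B_k : X → ℝ with B_k(x) > 0 for all x ∈ X, and let f_k : ℝ → ℝ be nondecreasing. Then the supremum over x ∈ X of Σ_{k=1}^K f_k(1 + |a_k(x)|²/B_k(x)) equals the supremum over pairs (x, ν) with x ∈ X and ν ∈ ℂ^K of Σ_{k=1}^K f_k(1 + 2 Re(conj(ν_k) a_k(x)) − |ν_k|² B_k(x)) (as an equality of suprema in the extended reals). -/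
/-!
For `b > 0` the surrogate `2 Re(conj ν · a) − ‖ν‖² b` equals `‖a‖²/b − ‖a − b ν‖²/b`, so it is at
most `‖a‖²/b`, with equality at `ν = a/b`. Since the `ν_k` are independent and each `f_k` is
monotone, maximizing over `ν` for fixed `x` recovers the original objective, and the two suprema
agree after splitting the supremum over `X × ℂᴷ` into an iterated one.
-/

open Set

section Surrogate

variable {𝕜 : Type*} [RCLike 𝕜]

open RCLike ComplexConjugate

def quadraticSurrogate (ν a : 𝕜) (b : ℝ) : ℝ :=
  2 * re (conj ν * a) - ‖ν‖ ^ 2 * b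

theorem quadraticSurrogate_eq_sub (ν a : 𝕜) {b : ℝ} (hb : b ≠ 0) :
    quadraticSurrogate ν a b = ‖a‖ ^ 2 / b - ‖a - (b : 𝕜) * ν‖ ^ 2 / b := by
  have h_re : re (conj a * ((b : 𝕜) * ν)) = b * re (conj ν * a) := by
    rw [mul_left_comm, re_ofReal_mul, ← conj_re, map_mul, conj_conj, mul_comm a]
  rw [quadraticSurrogate, @norm_sub_sq 𝕜, RCLike.inner_apply', h_re, norm_mul, norm_algebraMap',
    Real.norm_eq_abs, mul_pow, sq_abs]
  field_simp
  ring

theorem quadraticSurrogate_le (ν a : 𝕜) {b : ℝ} (hb : 0 < b) :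
    quadraticSurrogate ν a b ≤ ‖a‖ ^ 2 / b := by
  rw [quadraticSurrogate_eq_sub ν a hb.ne']
  have := div_nonneg (sq_nonneg ‖a - (b : 𝕜) * ν‖) hb.le
  linarith

theorem quadraticSurrogate_div_self (a : 𝕜) {b : ℝ} (hb : b ≠ 0) :
    quadraticSurrogate (a / b) a b = ‖a‖ ^ 2 / b := by
  rw [quadraticSurrogate_eq_sub _ a hb, mul_div_cancel₀ a (by exact_mod_cast hb), sub_self,
    norm_zero]
  ring

theorem isGreatest_range_quadraticSurrogate (a : 𝕜) {b : ℝ} (hb : 0 < b) :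
    IsGreatest (range fun ν => quadraticSurrogate ν a b) (‖a‖ ^ 2 / b) :=
  ⟨⟨a / b, quadraticSurrogate_div_self a hb.ne'⟩,
    forall_mem_range.2 fun ν => quadraticSurrogate_le ν a hb⟩

end Surrogate

theorem Monotone.isGreatest_range_comp {α β γ : Type*} [Preorder β] [Preorder γ] {f : β → γ}
    {g : α → β} {m : β} (hf : Monotone f) (hg : IsGreatest (range g) m) :
    IsGreatest (range (f ∘ g)) (f m) :=
  range_comp f g ▸ hf.map_isGreatest hg

theorem isGreatest_range_sum_apply {ι Y M : Type*} [Fintype ι] [AddCommMonoid M] [Preorder M]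
    [IsOrderedAddMonoid M] {g : ι → Y → M} {m : ι → M}
    (hg : ∀ k, IsGreatest (range (g k)) (m k)) :
    IsGreatest (range fun ν : ι → Y => ∑ k, g k (ν k)) (∑ k, m k) := by
  choose ν₀ hν₀ using fun k => (hg k).1
  refine ⟨⟨ν₀, Finset.sum_congr rfl fun k _ => hν₀ k⟩, forall_mem_range.2 fun ν => ?_⟩
  exact Finset.sum_le_sum fun k _ => (hg k).2 (mem_range_self (ν k))

theorem quadratic_transform_sup_eq_general {X : Type*} (K : ℕ)
    (a : Fin K → X → ℂ) (B : Fin K → X → ℝ) (hB : ∀ k x, 0 < B k x)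
    (f : Fin K → ℝ → ℝ) (hf : ∀ k, Monotone (f k)) :
    (⨆ x : X, ((∑ k, f k (1 + ‖a k x‖ ^ 2 / B k x) : ℝ) : EReal)) =
      ⨆ p : X × (Fin K → ℂ),
        ((∑ k, f k (1 + 2 * ((starRingEnd ℂ) (p.2 k) * a k p.1).re -
            ‖p.2 k‖ ^ 2 * B k p.1) : ℝ) : EReal) := by
  have h_inner (x : X) : IsGreatest
      (range fun ν : Fin K → ℂ => ((∑ k, f k (1 + 2 * ((starRingEnd ℂ) (ν k) * a k x).re -
            ‖ν k‖ ^ 2 * B k x) : ℝ) : EReal))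
      (∑ k, f k (1 + ‖a k x‖ ^ 2 / B k x) : ℝ) := by
    have h_term (k : Fin K) := ((hf k).comp (monotone_id.const_add 1)).isGreatest_range_comp
      (isGreatest_range_quadraticSurrogate (a k x) (hB k x))
    simpa only [Function.comp_def, quadraticSurrogate, RCLike.re_to_complex, id_eq,
      add_sub_assoc] using
      EReal.coe_strictMono.monotone.isGreatest_range_comp (isGreatest_range_sum_apply h_term)
  rw [iSup_prod]
  exact iSup_congr fun x => ((h_inner x).isLUB.iSup_eq).symm

/-- Quadratic transform for sum-of-functions-of-ratios: the supremum over `x ∈ X` of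
`Σ_k f_k(1 + |a_k(x)|²/B_k(x))` equals the supremum over `(x, ν) ∈ X × ℂᴷ` of
`Σ_k f_k(1 + 2 Re(conj(ν_k) a_k(x)) − |ν_k|² B_k(x))`, as suprema in the extended reals. -/
theorem quadratic_transform_sup_eq {X : Type*} [Nonempty X] (K : ℕ)
    (a : Fin K → X → ℂ) (B : Fin K → X → ℝ) (hB : ∀ k x, 0 < B k x)
    (f : Fin K → ℝ → ℝ) (hf : ∀ k, Monotone (f k)) :
    (⨆ x : X, ((∑ k, f k (1 + ‖a k x‖ ^ 2 / B k x) : ℝ) : EReal)) =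
      ⨆ p : X × (Fin K → ℂ),
        ((∑ k, f k (1 + 2 * ((starRingEnd ℂ) (p.2 k) * a k p.1).re -
            ‖p.2 k‖ ^ 2 * B k p.1) : ℝ) : EReal) :=
  quadratic_transform_sup_eq_general K a B hB f hf
end

section
/- Let K ∈ ℕ, and for each k ∈ {1,…,K} let c_k ∈ ℂ and d_k ∈ ℝ with d_k > 0. Define e_k(u) = 1 − 2 Re(u · c_k) + |u|² (|c_k|² + d_k) for u ∈ ℂ. Then the infimum over u ∈ ℂ^K and w ∈ (0, ∞)^K of Σ_{k=1}^K (w_k · e_k(u_k) − ln w_k) equals Σ_{k=1}^K (1 − ln(1 + |c_k|²/d_k)), and it is attained at u_k = conj(c_k)/(|c_k|² + d_k) and w_k = (d_k + |c_k|²)/d_k. -/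
/-!
Completing the square, `(‖c‖² + d) e(u) = d + ‖(‖c‖² + d) u - conj c‖²`, shows that the MSE is
minimised by the MMSE receiver `u = conj c / (‖c‖² + d)`, with value `d / (‖c‖² + d) = 1 / (1 + Γ)`.
For fixed `e > 0`, `w e - log w` is minimised at `w = 1 / e` with value `1 + log e`, which is
`log (w e) ≤ w e - 1`. Since `w > 0`, the two bounds compose, and the objective separates over `k`.
-/

open Real ComplexConjugate

noncomputable def mse (c : ℂ) (d : ℝ) (u : ℂ) : ℝ :=
  1 - 2 * (u * c).re + ‖u‖ ^ 2 * (‖c‖ ^ 2 + d)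

lemma one_sub_log_le_div_sub_log {y w : ℝ} (hy : 0 < y) (hw : 0 < w) :
    1 - log y ≤ w / y - log w := by
  have h := log_le_sub_one_of_pos (div_pos hw hy)
  rw [log_div hw.ne' hy.ne'] at h
  linarith

namespace mse

variable {c : ℂ} {d : ℝ}

lemma mul_eq_add_norm_sq (u : ℂ) :
    (‖c‖ ^ 2 + d) * mse c d u = d + ‖(‖c‖ ^ 2 + d : ℝ) * u - conj c‖ ^ 2 := by
  simp only [mse, ← Complex.normSq_eq_norm_sq, Complex.normSq_apply, Complex.mul_re,
    Complex.mul_im, Complex.sub_re, Complex.sub_im, Complex.ofReal_re, Complex.ofReal_im,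
    Complex.conj_re, Complex.conj_im]
  ring

lemma div_le (hd : 0 < d) (u : ℂ) : d / (‖c‖ ^ 2 + d) ≤ mse c d u := by
  have hA : 0 < ‖c‖ ^ 2 + d := by positivity
  rw [div_le_iff₀' hA, mul_eq_add_norm_sq]
  exact le_add_of_nonneg_right (sq_nonneg _)

lemma mmse (hd : 0 < d) :
    mse c d (conj c / (‖c‖ ^ 2 + d : ℝ)) = d / (‖c‖ ^ 2 + d) := by
  have hA : 0 < ‖c‖ ^ 2 + d := by positivity
  rw [eq_div_iff hA.ne', mul_comm, mul_eq_add_norm_sq,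
    mul_div_cancel₀ _ (Complex.ofReal_ne_zero.mpr hA.ne'), sub_self, norm_zero]
  ring

end mse

lemma one_add_sq_div_eq_inv {c : ℂ} {d : ℝ} (hd : 0 < d) :
    1 + ‖c‖ ^ 2 / d = (d / (‖c‖ ^ 2 + d))⁻¹ := by
  field_simp
  ring

lemma one_sub_log_one_add_sinr_le {c : ℂ} {d : ℝ} (hd : 0 < d) (u : ℂ) {w : ℝ} (hw : 0 < w) :
    1 - log (1 + ‖c‖ ^ 2 / d) ≤ w * mse c d u - log w := by
  have hy : 0 < 1 + ‖c‖ ^ 2 / d := by positivity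
  calc 1 - log (1 + ‖c‖ ^ 2 / d)
      ≤ w / (1 + ‖c‖ ^ 2 / d) - log w := one_sub_log_le_div_sub_log hy hw
    _ = w * (d / (‖c‖ ^ 2 + d)) - log w := by rw [one_add_sq_div_eq_inv hd, div_inv_eq_mul]
    _ ≤ w * mse c d u - log w := by gcongr; exact mse.div_le hd u

lemma weighted_mse_mmse_eq {c : ℂ} {d : ℝ} (hd : 0 < d) :
    (d + ‖c‖ ^ 2) / d * mse c d (conj c / (‖c‖ ^ 2 + d : ℝ)) - log ((d + ‖c‖ ^ 2) / d)
      = 1 - log (1 + ‖c‖ ^ 2 / d) := by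
  have hw : (d + ‖c‖ ^ 2) / d = 1 + ‖c‖ ^ 2 / d := by field_simp
  rw [mse.mmse hd, hw, one_add_sq_div_eq_inv hd, inv_mul_cancel₀ (by positivity)]

/-- WMSE reformulation for sum rate: the infimum over receivers `u ∈ ℂᴷ` and positive
weights `w` of `Σ_k (w_k e_k(u_k) − ln w_k)` equals `Σ_k (1 − ln(1 + |c_k|²/d_k))`,
attained at `u_k = conj(c_k)/(|c_k|² + d_k)` and `w_k = (d_k + |c_k|²)/d_k`. -/
theorem wmse_sum_rate_equiv (K : ℕ) (c : Fin K → ℂ) (d : Fin K → ℝ) (hd : ∀ k, 0 < d k) :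
    IsLeast {v : ℝ | ∃ (u : Fin K → ℂ) (w : Fin K → ℝ), (∀ k, 0 < w k) ∧
        v = ∑ k, (w k * (1 - 2 * (u k * c k).re +
              ‖u k‖ ^ 2 * (‖c k‖ ^ 2 + d k)) -
            Real.log (w k))}
      (∑ k, (1 - Real.log (1 + ‖c k‖ ^ 2 / d k))) ∧
    (let u : Fin K → ℂ := fun k =>
        (starRingEnd ℂ) (c k) / ((‖c k‖ ^ 2 + d k : ℝ) : ℂ);
     let w : Fin K → ℝ := fun k => (d k + ‖c k‖ ^ 2) / d k;
     ∑ k, (w k * (1 - 2 * (u k * c k).re +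
            ‖u k‖ ^ 2 * (‖c k‖ ^ 2 + d k)) -
          Real.log (w k))
        = ∑ k, (1 - Real.log (1 + ‖c k‖ ^ 2 / d k))) := by
  have attained :
      ∑ k, ((d k + ‖c k‖ ^ 2) / d k * mse (c k) (d k) (conj (c k) / (‖c k‖ ^ 2 + d k : ℝ))
        - log ((d k + ‖c k‖ ^ 2) / d k)) = ∑ k, (1 - log (1 + ‖c k‖ ^ 2 / d k)) :=
    Finset.sum_congr rfl fun k _ => weighted_mse_mmse_eq (hd k)
  refine ⟨⟨⟨_, _, fun k => by have := hd k; positivity, attained.symm⟩, ?_⟩, attained⟩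
  rintro v ⟨u, w, hw, rfl⟩
  exact Finset.sum_le_sum fun k _ => one_sub_log_one_add_sinr_le (hd k) (u k) (hw k)
end

section
/- Let K ∈ ℕ, and for each k ∈ {1,…,K} let c_k ∈ ℂ and d_k ∈ ℝ with d_k > 0. Define e_k(u) = 1 − 2 Re(u · c_k) + |u|² (|c_k|² + d_k) for u ∈ ℂ. Then the supremum, over all ν ∈ ℂ^K such that 1 + 2 Re(conj(ν_k) c_k) − |ν_k|² d_k > 0 for every k, of Σ_{k=1}^K ln(1 + 2 Re(conj(ν_k) c_k) − |ν_k|² d_k) equals K minus the infimum over u ∈ ℂ^K and w ∈ (0, ∞)^K of Σ_{k=1}^K (w_k · e_k(u_k) − ln w_k); both sides equal Σ_{k=1}^K ln(1 + |c_k|²/d_k). -/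
/-!
Both problems decouple across users, so it suffices to solve the one-user problems. With
`Γ = ‖c‖² / d`, completing the square shows that the quadratic-transform surrogate
`1 + 2 Re(ν̄ c) - ‖ν‖² d` is at most `1 + Γ`, with equality at `ν = c / d`, and that the
MSE `e(u)` is at least `(1 + Γ)⁻¹`, with equality at the MMSE receiver
`u = c̄ / (‖c‖² + d)`. Finally `min_{w > 0} (w e - ln w) = 1 + ln e` (from `ln x ≤ x - 1`,
attained at `w = e⁻¹`), so the optimal weighted MSE of a user is `1 - ln (1 + Γ)`.
-/

open ComplexConjugate

noncomputable section

namespace QuadraticTransform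

variable (c : ℂ) (d : ℝ)

def surrogate (ν : ℂ) : ℝ := 1 + 2 * (conj ν * c).re - ‖ν‖ ^ 2 * d

def mse (u : ℂ) : ℝ := 1 - 2 * (u * c).re + ‖u‖ ^ 2 * (‖c‖ ^ 2 + d)

variable {c d}

theorem one_add_sq_norm_div_pos (hd : 0 < d) : 0 < 1 + ‖c‖ ^ 2 / d := by positivity

theorem surrogate_le (hd : 0 < d) (ν : ℂ) : surrogate c d ν ≤ 1 + ‖c‖ ^ 2 / d := by
  rw [surrogate, Complex.sq_norm, Complex.sq_norm, add_sub_assoc, add_le_add_iff_left,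
    le_div_iff₀ hd]
  simp only [Complex.mul_re, Complex.normSq_apply, Complex.conj_re, Complex.conj_im]
  nlinarith [sq_nonneg (ν.re * d - c.re), sq_nonneg (ν.im * d - c.im)]

theorem surrogate_inv_smul_self (hd : d ≠ 0) :
    surrogate c d (d⁻¹ • c) = 1 + ‖c‖ ^ 2 / d := by
  rw [surrogate, Complex.sq_norm, Complex.sq_norm]
  simp only [Complex.real_smul, map_mul, Complex.mul_re, Complex.normSq_apply,
    Complex.conj_re, Complex.conj_im, Complex.mul_im, Complex.ofReal_re, Complex.ofReal_im]
  field_simp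
  ring

theorem inv_le_mse (hd : 0 < d) (u : ℂ) : (1 + ‖c‖ ^ 2 / d)⁻¹ ≤ mse c d u := by
  have hs : 0 < ‖c‖ ^ 2 + d := by positivity
  have hinv : (1 + ‖c‖ ^ 2 / d)⁻¹ = d / (‖c‖ ^ 2 + d) := by field_simp; ring
  rw [hinv, div_le_iff₀ hs, mse, Complex.sq_norm, Complex.sq_norm]
  simp only [Complex.mul_re, Complex.normSq_apply]
  nlinarith [sq_nonneg (u.re * (c.re ^ 2 + c.im ^ 2 + d) - c.re),
    sq_nonneg (u.im * (c.re ^ 2 + c.im ^ 2 + d) + c.im), sq_nonneg c.re, sq_nonneg c.im]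

theorem mse_mmse (hd : 0 < d) :
    mse c d ((‖c‖ ^ 2 + d)⁻¹ • conj c) = (1 + ‖c‖ ^ 2 / d)⁻¹ := by
  have hs : 0 < ‖c‖ ^ 2 + d := by positivity
  have hre : ((‖c‖ ^ 2 + d)⁻¹ • conj c * c).re = (‖c‖ ^ 2 + d)⁻¹ * ‖c‖ ^ 2 := by
    rw [smul_mul_assoc, Complex.real_smul, Complex.re_ofReal_mul, mul_comm (conj c),
      Complex.mul_conj, Complex.ofReal_re, ← Complex.sq_norm]
  have hnorm : ‖(‖c‖ ^ 2 + d)⁻¹ • conj c‖ = (‖c‖ ^ 2 + d)⁻¹ * ‖c‖ := by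
    rw [norm_smul, Real.norm_eq_abs, Complex.norm_conj, abs_of_pos (inv_pos.mpr hs)]
  rw [mse, hre, hnorm]
  field_simp
  ring

theorem one_add_log_le_mul_sub_log {e w : ℝ} (he : 0 < e) (hw : 0 < w) :
    1 + Real.log e ≤ w * e - Real.log w := by
  have h := Real.log_le_sub_one_of_pos (mul_pos hw he)
  rw [Real.log_mul hw.ne' he.ne'] at h
  linarith

theorem one_sub_log_le_weighted_mse (hd : 0 < d) (u : ℂ) {w : ℝ} (hw : 0 < w) :
    1 - Real.log (1 + ‖c‖ ^ 2 / d) ≤ w * mse c d u - Real.log w := by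
  have hmin : 0 < (1 + ‖c‖ ^ 2 / d)⁻¹ := inv_pos.mpr (one_add_sq_norm_div_pos hd)
  have hlog := Real.log_le_log hmin (inv_le_mse hd u)
  have := one_add_log_le_mul_sub_log (hmin.trans_le (inv_le_mse hd u)) hw
  rw [Real.log_inv] at hlog
  linarith

theorem weighted_mse_mmse (hd : 0 < d) :
    (1 + ‖c‖ ^ 2 / d) * mse c d ((‖c‖ ^ 2 + d)⁻¹ • conj c)
        - Real.log (1 + ‖c‖ ^ 2 / d) = 1 - Real.log (1 + ‖c‖ ^ 2 / d) := by
  rw [mse_mmse hd, mul_inv_cancel₀ (one_add_sq_norm_div_pos hd).ne']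

section Sum

variable {ι : Type*} [Fintype ι] {c : ι → ℂ} {d : ι → ℝ}

theorem isGreatest_sum_log_surrogate (hd : ∀ i, 0 < d i) :
    IsGreatest {v : ℝ | ∃ ν : ι → ℂ, (∀ i, 0 < surrogate (c i) (d i) (ν i)) ∧
        v = ∑ i, Real.log (surrogate (c i) (d i) (ν i))}
      (∑ i, Real.log (1 + ‖c i‖ ^ 2 / d i)) := by
  refine ⟨⟨fun i => (d i)⁻¹ • c i, fun i => ?_, ?_⟩, ?_⟩
  · rw [surrogate_inv_smul_self (hd i).ne']
    exact one_add_sq_norm_div_pos (hd i)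
  · simp only [surrogate_inv_smul_self (hd _).ne']
  · rintro v ⟨ν, hν, rfl⟩
    exact Finset.sum_le_sum fun i _ =>
      Real.log_le_log (hν i) (surrogate_le (hd i) (ν i))

theorem isLeast_sum_weighted_mse (hd : ∀ i, 0 < d i) :
    IsLeast {v : ℝ | ∃ (u : ι → ℂ) (w : ι → ℝ), (∀ i, 0 < w i) ∧
        v = ∑ i, (w i * mse (c i) (d i) (u i) - Real.log (w i))}
      (∑ i, (1 - Real.log (1 + ‖c i‖ ^ 2 / d i))) := by
  refine ⟨⟨fun i => (‖c i‖ ^ 2 + d i)⁻¹ • conj (c i), fun i => 1 + ‖c i‖ ^ 2 / d i,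
    fun i => one_add_sq_norm_div_pos (hd i), ?_⟩, ?_⟩
  · simp only [weighted_mse_mmse (hd _)]
  · rintro v ⟨u, w, hw, rfl⟩
    exact Finset.sum_le_sum fun i _ => one_sub_log_le_weighted_mse (hd i) (u i) (hw i)

end Sum

end QuadraticTransform

end

open QuadraticTransform in
/-- Equivalence of the quadratic transform and the WMSE reformulation for sum rate
maximization: the supremum of the quadratic-transform surrogate sum rate equals `K` minus
the infimum of the weighted-MSE objective, and both equal `Σ_k ln(1 + |c_k|²/d_k)`. -/
theorem quadratic_transform_wmse_equiv (K : ℕ) (c : Fin K → ℂ) (d : Fin K → ℝ)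
    (hd : ∀ k, 0 < d k) :
    sSup {v : ℝ | ∃ ν : Fin K → ℂ,
        (∀ k, 0 < 1 + 2 * ((starRingEnd ℂ) (ν k) * c k).re - ‖ν k‖ ^ 2 * d k) ∧
        v = ∑ k, Real.log (1 + 2 * ((starRingEnd ℂ) (ν k) * c k).re -
            ‖ν k‖ ^ 2 * d k)}
      = (K : ℝ) - sInf {v : ℝ | ∃ (u : Fin K → ℂ) (w : Fin K → ℝ), (∀ k, 0 < w k) ∧
          v = ∑ k, (w k * (1 - 2 * (u k * c k).re +
                ‖u k‖ ^ 2 * (‖c k‖ ^ 2 + d k)) -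
              Real.log (w k))} ∧
    sSup {v : ℝ | ∃ ν : Fin K → ℂ,
        (∀ k, 0 < 1 + 2 * ((starRingEnd ℂ) (ν k) * c k).re - ‖ν k‖ ^ 2 * d k) ∧
        v = ∑ k, Real.log (1 + 2 * ((starRingEnd ℂ) (ν k) * c k).re -
            ‖ν k‖ ^ 2 * d k)}
      = ∑ k, Real.log (1 + ‖c k‖ ^ 2 / d k) := by
  have hSup := isGreatest_sum_log_surrogate (c := c) hd
  have hInf := isLeast_sum_weighted_mse (c := c) hd
  have hsum : ∑ k, (1 - Real.log (1 + ‖c k‖ ^ 2 / d k))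
      = (K : ℝ) - ∑ k, Real.log (1 + ‖c k‖ ^ 2 / d k) := by
    simp [Finset.sum_sub_distrib]
  refine ⟨hSup.csSup_eq.trans ?_, hSup.csSup_eq⟩
  rw [eq_sub_iff_add_eq', ← eq_sub_iff_add_eq, ← hsum]
  exact hInf.csInf_eq
end

section
/- Let N, M ∈ ℕ and σ_ε > 0. On a probability space, let Λ be an N×M random matrix and λ an N-dimensional complex random vector such that the NM entries of Λ together with the N entries of λ are mutually independent complex random variables, each with zero mean, finite second moment E[|·|²] = σ_ε², and square-integrable. Let Φ be an N×N diagonal complex matrix with |Φ_{ii}| = 1 for all i, let Ĥ be a deterministic N×M complex matrix, ĥ ∈ ℂ^N and f ∈ ℂ^M deterministic vectors. Then E[ |λᴴ Φ Ĥ f + ĥᴴ Φ Λ f + λᴴ Φ Λ f|² ] = σ_ε² (‖ĥ‖² ‖f‖² + ‖Ĥ f‖²) + N σ_ε⁴ ‖f‖². -/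
/-!
Write `U_a = conj λ_a` (with `U_none = 1`) and `W_b = Λ_b` (with `W_none = 1`). Each of these
families is orthogonal in `L²`, with second moments `1` and `σ_ε²`, because its entries are
independent and centred; since the `λ`-block is independent of the `Λ`-block, the products
`U_a W_b` are again orthogonal, with second moments the products of the factors' moments.
The residual is a deterministic linear combination of the `U_a W_b`, so its second moment is
the weighted sum of squared coefficients (Pythagoras), and `|φ_i| = 1` makes that sum the
stated closed form.
-/

open Matrix MeasureTheory ProbabilityTheory ComplexConjugate

lemma MeasureTheory.Integrable.complex_conj {Ω : Type*} [MeasurableSpace Ω] {μ : Measure Ω}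
    {f : Ω → ℂ} (hf : Integrable f μ) : Integrable (fun ω => conj (f ω)) μ :=
  hf.norm.mono' (Complex.continuous_conj.comp_aestronglyMeasurable hf.1)
    (.of_forall fun ω => by simp)

lemma ProbabilityTheory.iIndepFun.indepFun_sumElim {Ω ι κ β : Type*} [MeasurableSpace Ω]
    {μ : Measure Ω} [Fintype ι] [Fintype κ] [MeasurableSpace β] {f : ι → Ω → β}
    {g : κ → Ω → β} (h : iIndepFun (Sum.elim f g) μ) (hf : ∀ i, AEMeasurable (f i) μ)
    (hg : ∀ j, AEMeasurable (g j) μ) :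
    IndepFun (fun ω i => f i ω) (fun ω j => g j ω) μ := by
  have hST := h.indepFun_finset₀ (Finset.univ.map .inl) (Finset.univ.map .inr)
    (by simp [Finset.disjoint_left]) (by rintro (i | j) <;> simp [hf, hg])
  exact hST.comp (φ := fun x i => x ⟨.inl i, by simp⟩) (ψ := fun x j => x ⟨.inr j, by simp⟩)
    (measurable_pi_lambda _ fun _ => measurable_pi_apply _)
    (measurable_pi_lambda _ fun _ => measurable_pi_apply _)

lemma measurable_option_elim_one {ι β : Type*} [One β] [MeasurableSpace β] :
    Measurable fun (x : ι → β) (a : Option ι) => a.elim 1 x :=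
  measurable_pi_lambda _ fun a => by cases a <;> simp [measurable_pi_apply, measurable_const]

section OrthogonalMoments

variable {Ω ι : Type*} [MeasurableSpace Ω] {μ : Measure Ω}

structure HasOrthogonalMoments (μ : Measure Ω) (X : ι → Ω → ℂ) (v : ι → ℝ) : Prop where
  integrable_mul_conj : ∀ s t, Integrable (fun ω => X s ω * conj (X t ω)) μ
  integral_mul_conj_self : ∀ s, ∫ ω, X s ω * conj (X s ω) ∂μ = v s
  integral_mul_conj_of_ne : ∀ {s t}, s ≠ t → ∫ ω, X s ω * conj (X t ω) ∂μ = 0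

lemma integral_mul_conj_self_eq_norm_sq (f : Ω → ℂ) :
    ∫ ω, f ω * conj (f ω) ∂μ = ((∫ ω, ‖f ω‖ ^ 2 ∂μ : ℝ) : ℂ) := by
  rw [← integral_complex_ofReal]
  simp_rw [Complex.mul_conj']
  push_cast
  rfl

lemma hasOrthogonalMoments_option_elim [IsProbabilityMeasure μ] {g : ι → Ω → ℂ} {v : ι → ℝ}
    (hindep : Pairwise fun i j => IndepFun (g i) (g j) μ) (hL2 : ∀ i, MemLp (g i) 2 μ)
    (hmean : ∀ i, ∫ ω, g i ω ∂μ = 0) (hvar : ∀ i, ∫ ω, ‖g i ω‖ ^ 2 ∂μ = v i) :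
    HasOrthogonalMoments μ (fun (a : Option ι) ω => a.elim 1 fun i => g i ω)
      (fun a => a.elim 1 v) where
  integrable_mul_conj := by
    have hint i : Integrable (g i) μ := (hL2 i).integrable one_le_two
    rintro (_ | i) (_ | j)
    · simp
    · simpa using (hint j).complex_conj
    · simpa using hint i
    · exact (hL2 i).integrable_mul (hL2 j).star
  integral_mul_conj_self := by
    rintro (_ | i)
    · simp
    · simp only [Option.elim_some]
      rw [integral_mul_conj_self_eq_norm_sq, hvar]
  integral_mul_conj_of_ne := by
    rintro (_ | i) (_ | j) hij
    · exact absurd rfl hij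
    · simp [integral_conj, hmean]
    · simpa using hmean i
    · have hind : IndepFun (g i) (fun ω => conj (g j ω)) μ :=
        (hindep fun h => hij (congrArg some h)).comp measurable_id
          Complex.continuous_conj.measurable
      simp only [Option.elim_some]
      rw [hind.integral_fun_mul_eq_mul_integral (hL2 i).aestronglyMeasurable
        (hL2 j).star.aestronglyMeasurable, hmean, zero_mul]

namespace HasOrthogonalMoments

variable {X : ι → Ω → ℂ} {v : ι → ℝ}

lemma star (h : HasOrthogonalMoments μ X v) :
    HasOrthogonalMoments μ (fun t ω => conj (X t ω)) v := by
  have hconj s t : ∫ ω, conj (X s ω) * conj (conj (X t ω)) ∂μ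
      = conj (∫ ω, X s ω * conj (X t ω) ∂μ) := by
    simp_rw [← integral_conj, map_mul]
  refine ⟨fun s t => ?_, fun s => ?_, fun hst => ?_⟩
  · simpa using (h.integrable_mul_conj s t).complex_conj
  · rw [hconj, h.integral_mul_conj_self, Complex.conj_ofReal]
  · rw [hconj, h.integral_mul_conj_of_ne hst, map_zero]

lemma mul {α β : Type*} {U : α → Ω → ℂ} {W : β → Ω → ℂ} {v : α → ℝ} {w : β → ℝ}
    (hUW : IndepFun (fun ω a => U a ω) (fun ω b => W b ω) μ)
    (hU : HasOrthogonalMoments μ U v) (hW : HasOrthogonalMoments μ W w) :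
    HasOrthogonalMoments μ (fun (p : α × β) ω => U p.1 ω * W p.2 ω)
      (fun p => v p.1 * w p.2) := by
  have hsplit (p q : α × β) ω : U p.1 ω * W p.2 ω * conj (U q.1 ω * W q.2 ω)
      = U p.1 ω * conj (U q.1 ω) * (W p.2 ω * conj (W q.2 ω)) := by
    rw [map_mul]; ring
  have hind (p q : α × β) : IndepFun (fun ω => U p.1 ω * conj (U q.1 ω))
      (fun ω => W p.2 ω * conj (W q.2 ω)) μ :=
    hUW.comp (φ := fun u : α → ℂ => u p.1 * conj (u q.1))
      (ψ := fun u : β → ℂ => u p.2 * conj (u q.2)) (by fun_prop) (by fun_prop)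
  have hintegral (p q : α × β) : ∫ ω, U p.1 ω * W p.2 ω * conj (U q.1 ω * W q.2 ω) ∂μ
      = (∫ ω, U p.1 ω * conj (U q.1 ω) ∂μ) * ∫ ω, W p.2 ω * conj (W q.2 ω) ∂μ := by
    simp_rw [hsplit]
    exact (hind p q).integral_fun_mul_eq_mul_integral
      (hU.integrable_mul_conj _ _).aestronglyMeasurable
      (hW.integrable_mul_conj _ _).aestronglyMeasurable
  refine ⟨fun p q => ?_, fun p => ?_, fun {p q} hpq => ?_⟩
  · simp_rw [hsplit]
    exact (hind p q).integrable_mul (hU.integrable_mul_conj _ _) (hW.integrable_mul_conj _ _)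
  · rw [hintegral, hU.integral_mul_conj_self, hW.integral_mul_conj_self, Complex.ofReal_mul]
  · rw [hintegral]
    obtain h | h := not_and_or.mp (mt Prod.ext_iff.mpr hpq)
    · rw [hU.integral_mul_conj_of_ne h, zero_mul]
    · rw [hW.integral_mul_conj_of_ne h, mul_zero]

lemma integral_norm_sum_sq [Fintype ι] (h : HasOrthogonalMoments μ X v) (a : ι → ℂ) :
    ∫ ω, ‖∑ t, a t * X t ω‖ ^ 2 ∂μ = ∑ t, ‖a t‖ ^ 2 * v t := by
  have hexpand ω : ((‖∑ t, a t * X t ω‖ ^ 2 : ℝ) : ℂ)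
      = ∑ s, ∑ t, a s * conj (a t) * (X s ω * conj (X t ω)) := by
    push_cast
    rw [← Complex.mul_conj', map_sum, Finset.sum_mul_sum]
    simp only [map_mul]
    exact Finset.sum_congr rfl fun s _ => Finset.sum_congr rfl fun t _ => by ring
  have hdiag s : ∑ t, a s * conj (a t) * ∫ ω, X s ω * conj (X t ω) ∂μ
      = ((‖a s‖ ^ 2 * v s : ℝ) : ℂ) := by
    rw [Fintype.sum_eq_single s fun t hts => by
      rw [h.integral_mul_conj_of_ne (Ne.symm hts), mul_zero],
      h.integral_mul_conj_self, Complex.mul_conj']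
    push_cast
    ring
  apply Complex.ofReal_injective
  rw [← integral_complex_ofReal, integral_congr_ae (.of_forall hexpand),
    integral_finsetSum _ fun s _ => integrable_finsetSum _ fun t _ =>
      (h.integrable_mul_conj s t).const_mul _, Complex.ofReal_sum]
  refine Finset.sum_congr rfl fun s _ => ?_
  rw [integral_finsetSum _ fun t _ => (h.integrable_mul_conj s t).const_mul _, ← hdiag]
  simp only [integral_const_mul]

end HasOrthogonalMoments

end OrthogonalMoments

section ResidualCoefficients

variable {n m : Type*} [Fintype n] [Fintype m] [DecidableEq n]

/-- Coefficients of the residual in the products `conj λ_a * Λ_b`, where index `none` stands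
for the constant `1`. -/
def residualCoeff (φ : n → ℂ) (Hhat : Matrix n m ℂ) (hhat : n → ℂ) (f : m → ℂ) :
    Option n × Option (n × m) → ℂ
  | (none, none) => 0
  | (some i, none) => φ i * (Hhat *ᵥ f) i
  | (none, some (i, j)) => conj (hhat i) * φ i * f j
  | (some k, some (i, j)) => if k = i then φ i * f j else 0

lemma residual_eq_sum_residualCoeff (φ : n → ℂ) (Hhat : Matrix n m ℂ) (hhat : n → ℂ)
    (f : m → ℂ) (lam : n → ℂ) (Lam : Matrix n m ℂ) :
    star lam ⬝ᵥ diagonal φ *ᵥ (Hhat *ᵥ f) + star hhat ⬝ᵥ diagonal φ *ᵥ (Lam *ᵥ f)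
        + star lam ⬝ᵥ diagonal φ *ᵥ (Lam *ᵥ f)
      = ∑ p, residualCoeff φ Hhat hhat f p
          * (conj (p.1.elim 1 lam) * p.2.elim 1 fun q => Lam q.1 q.2) := by
  simp only [dotProduct, mulVec_diagonal]
  simp only [Pi.star_apply, RCLike.star_def, mulVec, dotProduct, residualCoeff,
    Fintype.sum_prod_type, Fintype.sum_option, Option.elim_none, mul_one, Option.elim_some,
    map_one, one_mul, zero_add, ite_mul, zero_mul, Finset.sum_ite_irrel, Finset.sum_const_zero,
    Finset.sum_ite_eq, Finset.mem_univ, ↓reduceIte]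
  simp only [Finset.mul_sum, Finset.sum_mul, ← Finset.sum_add_distrib]
  exact Finset.sum_congr rfl fun _ _ => Finset.sum_congr rfl fun _ _ => by ring

lemma sum_norm_residualCoeff_sq {φ : n → ℂ} (hφ : ∀ i, ‖φ i‖ = 1) (Hhat : Matrix n m ℂ)
    (hhat : n → ℂ) (f : m → ℂ) (σ : ℝ) :
    ∑ p, ‖residualCoeff φ Hhat hhat f p‖ ^ 2
        * (p.1.elim 1 (fun _ => σ ^ 2) * p.2.elim 1 (fun _ => σ ^ 2))
      = σ ^ 2 * ((∑ i, ‖hhat i‖ ^ 2) * (∑ j, ‖f j‖ ^ 2) + ∑ i, ‖(Hhat *ᵥ f) i‖ ^ 2)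
        + Fintype.card n * σ ^ 4 * ∑ j, ‖f j‖ ^ 2 := by
  simp only [residualCoeff, Fintype.sum_prod_type, Fintype.sum_option, Option.elim_none,
    mul_one, Option.elim_some, norm_zero, ne_eq, OfNat.ofNat_ne_zero, not_false_eq_true,
    zero_pow, Complex.norm_mul, RCLike.norm_conj, hφ, one_mul, zero_add, apply_ite, ite_pow,
    ite_mul, zero_mul, Finset.sum_ite_irrel, Finset.sum_const_zero, Finset.sum_ite_eq,
    Finset.mem_univ, ↓reduceIte]
  simp only [Finset.sum_add_distrib, Finset.sum_const, Finset.card_univ, nsmul_eq_mul, mul_pow,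
    ← Finset.sum_mul, ← Finset.mul_sum]
  ring

end ResidualCoefficients

theorem icsi_residual_error_variance_general (N M : ℕ) (σε : ℝ)
    {Ω : Type*} [MeasurableSpace Ω] (μ : Measure Ω) [IsProbabilityMeasure μ]
    (Lam : Ω → Matrix (Fin N) (Fin M) ℂ) (lam : Ω → Fin N → ℂ)
    (g : (Fin N × Fin M) ⊕ Fin N → Ω → ℂ)
    (hg : g = Sum.elim (fun ij ω => Lam ω ij.1 ij.2) (fun i ω => lam ω i))
    (hindep : iIndepFun g μ)
    (hL2 : ∀ idx, MemLp (g idx) 2 μ)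
    (hmean : ∀ idx, ∫ ω, g idx ω ∂μ = 0)
    (hvar : ∀ idx, ∫ ω, ‖g idx ω‖ ^ 2 ∂μ = σε ^ 2)
    (φ : Fin N → ℂ) (hφ : ∀ i, ‖φ i‖ = 1)
    (Hhat : Matrix (Fin N) (Fin M) ℂ) (hhat : Fin N → ℂ) (f : Fin M → ℂ) :
    ∫ ω, ‖
        (star (lam ω) ⬝ᵥ (Matrix.diagonal φ).mulVec (Hhat.mulVec f) +
         star hhat ⬝ᵥ (Matrix.diagonal φ).mulVec ((Lam ω).mulVec f) +
         star (lam ω) ⬝ᵥ (Matrix.diagonal φ).mulVec ((Lam ω).mulVec f))‖ ^ 2 ∂μ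
      = σε ^ 2 * ((∑ i, ‖hhat i‖ ^ 2) * (∑ j, ‖f j‖ ^ 2) +
            ∑ i, ‖Hhat.mulVec f i‖ ^ 2) +
        N * σε ^ 4 * ∑ j, ‖f j‖ ^ 2 := by
  have hpair : Pairwise fun i j => IndepFun (g i) (g j) μ := fun _ _ => hindep.indepFun
  have hmeas idx : AEMeasurable (g idx) μ := (hL2 idx).aestronglyMeasurable.aemeasurable
  have hU := (hasOrthogonalMoments_option_elim (hpair.comp_of_injective Sum.inr_injective)
    (fun i => hL2 (.inr i)) (fun i => hmean (.inr i)) (fun i => hvar (.inr i))).star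
  have hW := hasOrthogonalMoments_option_elim (hpair.comp_of_injective Sum.inl_injective)
    (fun p => hL2 (.inl p)) (fun p => hmean (.inl p)) (fun p => hvar (.inl p))
  have hUW := ((Sum.elim_comp_inl_inr g ▸ hindep).indepFun_sumElim (fun p => hmeas (.inl p))
    (fun i => hmeas (.inr i))).symm.comp
    ((by fun_prop : Measurable fun (x : Option (Fin N) → ℂ) a => conj (x a)).comp
      measurable_option_elim_one) measurable_option_elim_one
  subst hg
  simp_rw [residual_eq_sum_residualCoeff]
  calc _ = ∑ p, ‖residualCoeff φ Hhat hhat f p‖ ^ 2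
        * (p.1.elim 1 (fun _ => σε ^ 2) * p.2.elim 1 (fun _ => σε ^ 2)) :=
      (hU.mul hUW hW).integral_norm_sum_sq _
    _ = _ := by rw [sum_norm_residualCoeff_sq hφ, Fintype.card_fin]

/-- Variance of the residual error term under imperfect CSI: if the entries of the
estimation-error matrix `Λ` and vector `λ` are mutually independent, zero-mean,
square-integrable, with second moment `σ_ε²`, `Φ = diag φ` has unit-modulus diagonal,
then `E[|λᴴ Φ Ĥ f + ĥᴴ Φ Λ f + λᴴ Φ Λ f|²]
  = σ_ε² (‖ĥ‖² ‖f‖² + ‖Ĥ f‖²) + N σ_ε⁴ ‖f‖²`. -/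
theorem icsi_residual_error_variance (N M : ℕ) (σε : ℝ) (hσε : 0 < σε)
    {Ω : Type*} [MeasurableSpace Ω] (μ : Measure Ω) [IsProbabilityMeasure μ]
    (Lam : Ω → Matrix (Fin N) (Fin M) ℂ) (lam : Ω → Fin N → ℂ)
    (g : (Fin N × Fin M) ⊕ Fin N → Ω → ℂ)
    (hg : g = Sum.elim (fun ij ω => Lam ω ij.1 ij.2) (fun i ω => lam ω i))
    (hindep : iIndepFun g μ)
    (hL2 : ∀ idx, MemLp (g idx) 2 μ)
    (hmean : ∀ idx, ∫ ω, g idx ω ∂μ = 0)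
    (hvar : ∀ idx, ∫ ω, ‖g idx ω‖ ^ 2 ∂μ = σε ^ 2)
    (φ : Fin N → ℂ) (hφ : ∀ i, ‖φ i‖ = 1)
    (Hhat : Matrix (Fin N) (Fin M) ℂ) (hhat : Fin N → ℂ) (f : Fin M → ℂ) :
    ∫ ω, ‖
        (star (lam ω) ⬝ᵥ (Matrix.diagonal φ).mulVec (Hhat.mulVec f) +
         star hhat ⬝ᵥ (Matrix.diagonal φ).mulVec ((Lam ω).mulVec f) +
         star (lam ω) ⬝ᵥ (Matrix.diagonal φ).mulVec ((Lam ω).mulVec f))‖ ^ 2 ∂μ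
      = σε ^ 2 * ((∑ i, ‖hhat i‖ ^ 2) * (∑ j, ‖f j‖ ^ 2) +
            ∑ i, ‖Hhat.mulVec f i‖ ^ 2) +
        N * σε ^ 4 * ∑ j, ‖f j‖ ^ 2 :=
  icsi_residual_error_variance_general N M σε μ Lam lam g hg hindep hL2 hmean hvar φ hφ Hhat hhat f
end
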